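/- Let N ≥ 1 and let B₁ ⊂ ℝ^N be the open unit ball centered at the origin. Let V : B₁ → ℝ be measurable and satisfy −|x|²/(1 − |x|²)² ≤ V(x) ≤ 0 for almost every x ∈ B₁. Then for every smooth function φ : ℝ^N → ℝ with compact support contained in B₁ one has ∫_{B₁} |∇φ|² dx + ∫_{B₁} V φ² dx ≥ N · ∫_{B₁} φ² dx. -/

import Mathlib

/-!
With `u x = 1 - ‖x‖²` and `ψ = φ² / u`, one computes `dψ(x) x = 2 φ ⟪∇φ, x⟫ / u + 2 φ² ‖x‖² / u²`.
Completing the square, `0 ≤ ‖∇φ + (φ / u) • x‖²`, and using `V ≥ -‖x‖² / u²` gives the pointwise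
bound `‖∇φ‖² + V φ² ≥ -dψ(x) x` on the ball. Integrating by parts against the coordinates,
`∫ dψ(x) x = -N ∫ ψ`, and `ψ ≥ φ²` because `0 < u ≤ 1`.
-/

open MeasureTheory Metric Module

theorem ContDiffOn.contDiff_of_tsupport_subset {𝕜 E F : Type*} [NontriviallyNormedField 𝕜]
    [NormedAddCommGroup E] [NormedSpace 𝕜 E] [NormedAddCommGroup F] [NormedSpace 𝕜 F]
    {n : WithTop ℕ∞} {f : E → F} {U : Set E} (hf : ContDiffOn 𝕜 n f U) (hU : IsOpen U)
    (hfU : tsupport f ⊆ U) : ContDiff 𝕜 n f := by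
  refine contDiff_iff_contDiffAt.2 fun x => ?_
  by_cases hx : x ∈ U
  · exact hf.contDiffAt (hU.mem_nhds hx)
  · exact contDiffAt_const.congr_of_eventuallyEq
      (notMem_tsupport_iff_eventuallyEq.1 fun h => hx (hfU h))

section IntegrationByParts

variable {E : Type*} [NormedAddCommGroup E] [NormedSpace ℝ E] [MeasurableSpace E] [BorelSpace E]
  {μ : Measure E} {ψ : E → ℝ}

theorem ContDiff.integrable_fderiv_apply_self [IsFiniteMeasureOnCompacts μ]
    (hψ : ContDiff ℝ 1 ψ) (hψc : HasCompactSupport ψ) :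
    Integrable (fun x => fderiv ℝ ψ x x) μ :=
  ((hψ.continuous_fderiv one_ne_zero).clm_apply continuous_id).integrable_of_hasCompactSupport
    ((hψc.fderiv ℝ).mono (Function.support_subset_iff'.2 fun x hx => by
      simp [Function.notMem_support.1 hx]))

variable [FiniteDimensional ℝ E] [μ.IsAddHaarMeasure]

theorem integral_fderiv_apply_self (hψ : ContDiff ℝ 1 ψ) (hψc : HasCompactSupport ψ) :
    ∫ x, fderiv ℝ ψ x x ∂μ = -(finrank ℝ E * ∫ x, ψ x ∂μ) := by
  let b := finBasis ℝ E
  let c : Fin (finrank ℝ E) → E →L[ℝ] ℝ := fun i => LinearMap.toContinuousLinearMap (b.coord i)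
  have hexpand : ∀ x, fderiv ℝ ψ x x = ∑ i, c i x * fderiv ℝ ψ x (b i) := fun x => by
    conv_lhs => rw [← b.sum_repr x, map_sum]
    simp [c]
  have hintegrable : ∀ i, Integrable (fun x => c i x * fderiv ℝ ψ x (b i)) μ := fun i =>
    ((c i).continuous.mul ((hψ.continuous_fderiv one_ne_zero).clm_apply continuous_const))
      |>.integrable_of_hasCompactSupport (hψc.fderiv_apply ℝ (b i)).mul_left
  have hcoord : ∀ i, ∫ x, c i x * fderiv ℝ ψ x (b i) ∂μ = -∫ x, ψ x ∂μ := fun i => by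
    have hc : c i (b i) = 1 := by simp [c]
    simpa [(c i).fderiv, hc] using integral_mul_fderiv_eq_neg_fderiv_mul_of_integrable
      (by simpa [(c i).fderiv, hc] using hψ.continuous.integrable_of_hasCompactSupport hψc)
      (hintegrable i)
      (((c i).continuous.mul hψ.continuous).integrable_of_hasCompactSupport hψc.mul_left)
      (fun x _ => (c i).differentiableAt) (fun x _ => hψ.differentiable one_ne_zero x)
  rw [integral_congr_ae (Filter.Eventually.of_forall hexpand),
    integral_finsetSum _ fun i _ => hintegrable i]
  simp [hcoord]

theorem setIntegral_fderiv_apply_self (hψ : ContDiff ℝ 1 ψ) (hψc : HasCompactSupport ψ)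
    {s : Set E} (hψs : tsupport ψ ⊆ s) :
    ∫ x in s, fderiv ℝ ψ x x ∂μ = -(finrank ℝ E * ∫ x in s, ψ x ∂μ) := by
  rw [setIntegral_eq_integral_of_forall_compl_eq_zero
      fun x hx => by simp [fderiv_of_notMem_tsupport ℝ fun h => hx (hψs h)],
    setIntegral_eq_integral_of_forall_compl_eq_zero
      fun x hx => image_eq_zero_of_notMem_tsupport fun h => hx (hψs h),
    integral_fderiv_apply_self hψ hψc]

end IntegrationByParts

theorem ContDiff.integrable_norm_gradient_sq {F : Type*} [NormedAddCommGroup F]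
    [InnerProductSpace ℝ F] [CompleteSpace F] [MeasurableSpace F] [BorelSpace F] {μ : Measure F}
    [IsFiniteMeasureOnCompacts μ] {φ : F → ℝ} (hφ : ContDiff ℝ 1 φ) (hφc : HasCompactSupport φ) :
    Integrable (fun x => ‖gradient φ x‖ ^ 2) μ := by
  simp only [gradient, LinearIsometryEquiv.norm_map]
  exact ((hφ.continuous_fderiv one_ne_zero).norm.pow 2).integrable_of_hasCompactSupport
    ((hφc.fderiv ℝ).mono (Function.support_subset_iff'.2 fun x hx => by
      simp [Function.notMem_support.1 hx]))

theorem one_sub_norm_sq_pos {F : Type*} [SeminormedAddCommGroup F] {x : F}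
    (hx : x ∈ ball (0 : F) 1) : 0 < 1 - ‖x‖ ^ 2 := by
  have := mem_ball_zero_iff.1 hx
  nlinarith [norm_nonneg x]

theorem le_mul_inv_one_sub_norm_sq {F : Type*} [SeminormedAddCommGroup F] {x : F} {a : ℝ}
    (ha : 0 ≤ a) (hx : x ∈ ball (0 : F) 1) : a ≤ a * (1 - ‖x‖ ^ 2)⁻¹ :=
  (le_div_self ha (one_sub_norm_sq_pos hx) (sub_le_self 1 (sq_nonneg _))).trans_eq
    (div_eq_mul_inv _ _)

theorem tsupport_sq_mul_subset {X : Type*} [TopologicalSpace X] (φ g : X → ℝ) :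
    tsupport (fun y => φ y ^ 2 * g y) ⊆ tsupport φ :=
  tsupport_mul_subset_left.trans_eq (by simp [tsupport])

section UnitBall

variable {F : Type*} [NormedAddCommGroup F] [InnerProductSpace ℝ F] {φ : F → ℝ}

theorem ContDiff.sq_mul_inv_one_sub_norm_sq {n : WithTop ℕ∞} (hφ : ContDiff ℝ n φ)
    (hφB : tsupport φ ⊆ ball (0 : F) 1) :
    ContDiff ℝ n (fun y => φ y ^ 2 * (1 - ‖y‖ ^ 2)⁻¹) :=
  ContDiffOn.contDiff_of_tsupport_subset
    ((hφ.pow 2).contDiffOn.mul ((contDiffOn_const.sub (contDiff_norm_sq ℝ).contDiffOn).inv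
      fun _ hy => (one_sub_norm_sq_pos hy).ne'))
    isOpen_ball ((tsupport_sq_mul_subset _ _).trans hφB)

theorem fderiv_sq_mul_inv_one_sub_norm_sq_apply_self {x : F} (hφ : DifferentiableAt ℝ φ x)
    (hx : x ∈ ball (0 : F) 1) :
    fderiv ℝ (fun y => φ y ^ 2 * (1 - ‖y‖ ^ 2)⁻¹) x x
      = 2 * φ x * fderiv ℝ φ x x / (1 - ‖x‖ ^ 2) + 2 * φ x ^ 2 * ‖x‖ ^ 2 / (1 - ‖x‖ ^ 2) ^ 2 := by
  have hu := (hasDerivAt_inv (one_sub_norm_sq_pos hx).ne').comp_hasFDerivAt x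
    ((hasFDerivAt_const (1 : ℝ) x).sub (hasFDerivAt_id x).norm_sq)
  have h : HasFDerivAt (fun y => φ y ^ 2 * (1 - ‖y‖ ^ 2)⁻¹) _ x := (hφ.hasFDerivAt.pow 2).mul hu
  rw [h.fderiv]
  simp only [id_eq, ContinuousLinearMap.comp_id, zero_sub, smul_neg, neg_smul, neg_neg,
    Nat.add_one_sub_one, pow_one, nsmul_eq_mul, Nat.cast_ofNat, add_apply,
    smul_apply, coe_innerSL_apply, inner_self_eq_norm_sq_to_K,
    Real.ringHom_apply, smul_eq_mul]
  ring

theorem neg_fderiv_sq_mul_inv_one_sub_norm_sq_apply_self_le [CompleteSpace F] {x : F} {v : ℝ}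
    (hφ : DifferentiableAt ℝ φ x) (hx : x ∈ ball (0 : F) 1)
    (hv : -(‖x‖ ^ 2 / (1 - ‖x‖ ^ 2) ^ 2) ≤ v) :
    -fderiv ℝ (fun y => φ y ^ 2 * (1 - ‖y‖ ^ 2)⁻¹) x x ≤ ‖gradient φ x‖ ^ 2 + v * φ x ^ 2 := by
  have hu := (one_sub_norm_sq_pos hx).ne'
  rw [fderiv_sq_mul_inv_one_sub_norm_sq_apply_self hφ hx, ← inner_gradient_left]
  generalize 1 - ‖x‖ ^ 2 = u at hu hv ⊢
  have hsq : 0 ≤ ‖gradient φ x + (φ x / u) • x‖ ^ 2 := sq_nonneg _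
  rw [norm_add_sq_real, real_inner_smul_right, norm_smul, Real.norm_eq_abs, mul_pow, sq_abs]
    at hsq
  linear_combination hsq + mul_le_mul_of_nonneg_right hv (sq_nonneg (φ x))

end UnitBall

theorem ground_state_ball_general {N : ℕ}
    {V : EuclideanSpace ℝ (Fin N) → ℝ} (hVmeas : Measurable V)
    (hV : ∀ᵐ x ∂(volume.restrict (Metric.ball (0 : EuclideanSpace ℝ (Fin N)) 1)),
      -(‖x‖ ^ 2 / (1 - ‖x‖ ^ 2) ^ 2) ≤ V x ∧ V x ≤ 0)
    (φ : EuclideanSpace ℝ (Fin N) → ℝ) (hφ : ContDiff ℝ (⊤ : ℕ∞) φ)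
    (hφc : HasCompactSupport φ)
    (hφΩ : tsupport φ ⊆ Metric.ball (0 : EuclideanSpace ℝ (Fin N)) 1) :
    (N : ℝ) * (∫ x in Metric.ball (0 : EuclideanSpace ℝ (Fin N)) 1, (φ x) ^ 2)
      ≤ (∫ x in Metric.ball (0 : EuclideanSpace ℝ (Fin N)) 1, ‖gradient φ x‖ ^ 2)
        + ∫ x in Metric.ball (0 : EuclideanSpace ℝ (Fin N)) 1, V x * (φ x) ^ 2 := by
  set B := ball (0 : EuclideanSpace ℝ (Fin N)) 1
  set ψ := fun y : EuclideanSpace ℝ (Fin N) => φ y ^ 2 * (1 - ‖y‖ ^ 2)⁻¹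
  have hφ1 : ContDiff ℝ 1 φ := hφ.of_le (by simp)
  have hψ : ContDiff ℝ 1 ψ := hφ1.sq_mul_inv_one_sub_norm_sq hφΩ
  have hψc : HasCompactSupport ψ := hφc.mono' (subset_closure.trans (tsupport_sq_mul_subset _ _))
  have hlow : ∀ᵐ x ∂volume.restrict B, -fderiv ℝ ψ x x ≤ ‖gradient φ x‖ ^ 2 + V x * φ x ^ 2 := by
    filter_upwards [hV, ae_restrict_mem measurableSet_ball] with x hVx hx
    exact neg_fderiv_sq_mul_inv_one_sub_norm_sq_apply_self_le
      (hφ1.differentiable one_ne_zero x) hx hVx.1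
  have hgrad : IntegrableOn (fun x => ‖gradient φ x‖ ^ 2) B := hφ1.integrable_norm_gradient_sq hφc
  have hVφ : IntegrableOn (fun x => V x * φ x ^ 2) B :=
    integrable_of_le_of_le (hVmeas.mul (hφ.continuous.measurable.pow_const 2)).aestronglyMeasurable
      (hlow.mono fun x hx => by simp only [Pi.sub_apply, Pi.neg_apply]; linarith)
      (hV.mono fun x hx => mul_nonpos_of_nonpos_of_nonneg hx.2 (sq_nonneg _))
      ((hψ.integrable_fderiv_apply_self hψc).neg.sub hgrad) (integrable_zero _ _ _)
  calc (N : ℝ) * ∫ x in B, φ x ^ 2 ≤ N * ∫ x in B, ψ x :=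
        mul_le_mul_of_nonneg_left (integral_mono_of_nonneg (ae_of_all _ fun x => sq_nonneg _)
          (hψ.continuous.integrable_of_hasCompactSupport hψc) (ae_restrict_of_forall_mem
            measurableSet_ball fun x hx => le_mul_inv_one_sub_norm_sq (sq_nonneg _) hx))
          N.cast_nonneg
    _ = ∫ x in B, -fderiv ℝ ψ x x := by
        rw [integral_neg, setIntegral_fderiv_apply_self hψ hψc ((tsupport_sq_mul_subset _ _).trans
          hφΩ), finrank_euclideanSpace_fin, neg_neg]
    _ ≤ ∫ x in B, (‖gradient φ x‖ ^ 2 + V x * φ x ^ 2) :=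
        integral_mono_ae (hψ.integrable_fderiv_apply_self hψc).neg (hgrad.fun_add hVφ) hlow
    _ = _ := integral_add hgrad hVφ

/-- **Application to the unit ball**: for potentials `V` with
`-|x|²/(1-|x|²)² ≤ V ≤ 0` a.e. on the unit ball `B₁ ⊆ ℝ^N`, the quadratic form of
`-Δ + V` is bounded below by `N ∫ φ²`. -/
theorem ground_state_ball {N : ℕ} (hN : 1 ≤ N)
    {V : EuclideanSpace ℝ (Fin N) → ℝ} (hVmeas : Measurable V)
    (hV : ∀ᵐ x ∂(volume.restrict (Metric.ball (0 : EuclideanSpace ℝ (Fin N)) 1)),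
      -(‖x‖ ^ 2 / (1 - ‖x‖ ^ 2) ^ 2) ≤ V x ∧ V x ≤ 0)
    (φ : EuclideanSpace ℝ (Fin N) → ℝ) (hφ : ContDiff ℝ (⊤ : ℕ∞) φ)
    (hφc : HasCompactSupport φ)
    (hφΩ : tsupport φ ⊆ Metric.ball (0 : EuclideanSpace ℝ (Fin N)) 1) :
    (N : ℝ) * (∫ x in Metric.ball (0 : EuclideanSpace ℝ (Fin N)) 1, (φ x) ^ 2)
      ≤ (∫ x in Metric.ball (0 : EuclideanSpace ℝ (Fin N)) 1, ‖gradient φ x‖ ^ 2)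
        + ∫ x in Metric.ball (0 : EuclideanSpace ℝ (Fin N)) 1, V x * (φ x) ^ 2 :=
  ground_state_ball_general hVmeas hV φ hφ hφc hφΩ
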